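/- arXiv:1206.2687 — 3 statements merged into one kernel-verified Lean document; each statement's English description precedes it below -/
import Mathlib

section
/- Fix a real number δ > 0, an integer L ≥ 2, a real number α, and let η = δ or η = -δ. Define ε_j = (j - (L+1)/2)δ and P(u) = ∏_{j=1}^{L} (u - ε_j - η/2), and let S = {δ(k - L/2) : k = 1, ..., L-1}. Then for every M ≥ 1 and every tuple (v_1, ..., v_M) of pairwise distinct elements of S, the Bethe ansatz equations e^{2α} · P(v_k + η) · ∏_{j ≠ k} (v_k - v_j - η) = P(v_k) · ∏_{j ≠ k} (v_k - v_j + η) hold for all k = 1, ..., M (both sides being zero). In particular the associated energies E = 2∑_{k=1}^{M} v_k are independent of α. -/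
/- For `η = ±δ` the roots `ε_j + η/2` of `P` form the grid `δ(j - L/2)`, resp. `δ(j - 1 - L/2)`,
`j = 1, …, L`; every point `u ∈ S` lies in it together with `u + η`, so both sides vanish. -/
lemma picketFence_roots {δ η : ℝ} {L i : ℕ} (hη : η = δ ∨ η = -δ) {ε : ℕ → ℝ}
    (hε : ∀ j, ε j = ((j : ℝ) - ((L : ℝ) + 1) / 2) * δ)
    {P : ℝ → ℝ} (hP : ∀ u, P u = ∏ j ∈ Finset.Icc 1 L, (u - ε j - η / 2))
    (hi : i ∈ Finset.Icc 1 (L - 1)) :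
    P (δ * ((i : ℝ) - (L : ℝ) / 2)) = 0 ∧ P (δ * ((i : ℝ) - (L : ℝ) / 2) + η) = 0 := by
  obtain ⟨hi1, hiL⟩ := Finset.mem_Icc.mp hi
  have hmem : i ∈ Finset.Icc 1 L := Finset.mem_Icc.mpr ⟨hi1, by omega⟩
  have hmem' : i + 1 ∈ Finset.Icc 1 L := Finset.mem_Icc.mpr ⟨by omega, by omega⟩
  have root : ∀ j ∈ Finset.Icc 1 L, ∀ u, u = ε j + η / 2 → P u = 0 := fun j hj u hu => by
    rw [hP]
    exact Finset.prod_eq_zero hj (by rw [hu]; ring)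
  rcases hη with rfl | rfl
  · exact ⟨root i hmem _ (by rw [hε]; ring), root (i + 1) hmem' _ (by rw [hε]; push_cast; ring)⟩
  · exact ⟨root (i + 1) hmem' _ (by rw [hε]; push_cast; ring), root i hmem _ (by rw [hε]; ring)⟩

theorem stmt_3_general (δ : ℝ) (L : ℕ) (α : ℝ) (η : ℝ)
    (hη : η = δ ∨ η = -δ)
    (ε : ℕ → ℝ) (hε : ∀ j, ε j = ((j : ℝ) - ((L : ℝ) + 1) / 2) * δ)
    (P : ℝ → ℝ) (hP : ∀ u, P u = ∏ j ∈ Finset.Icc 1 L, (u - ε j - η / 2))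
    (M : ℕ) (v : Fin M → ℝ)
    (hvS : ∀ k, ∃ i ∈ Finset.Icc 1 (L - 1), v k = δ * ((i : ℝ) - (L : ℝ) / 2)) :
    ∀ k : Fin M,
      Real.exp (2 * α) * P (v k + η) * ∏ j ∈ Finset.univ.erase k, (v k - v j - η)
        = P (v k) * ∏ j ∈ Finset.univ.erase k, (v k - v j + η)
      ∧ P (v k) * ∏ j ∈ Finset.univ.erase k, (v k - v j + η) = 0 := by
  intro k
  obtain ⟨i, hi, hvk⟩ := hvS k
  obtain ⟨hPv, hPvη⟩ := picketFence_roots hη hε hP hi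
  rw [← hvk] at hPv hPvη
  simp only [hPv, hPvη, mul_zero, zero_mul, and_self]

/-- On the critical lines `η = ±δ`, every tuple of pairwise distinct elements of
`S = {δ(k - L/2) : k = 1, ..., L-1}` solves the Bethe ansatz equations
`e^{2α} P(v_k + η) ∏_{j≠k}(v_k - v_j - η) = P(v_k) ∏_{j≠k}(v_k - v_j + η)`,
both sides being zero; in particular the energies `E = 2∑_k v_k` are independent of `α`. -/
theorem stmt_3 (δ : ℝ) (hδ : 0 < δ) (L : ℕ) (hL : 2 ≤ L) (α : ℝ) (η : ℝ)
    (hη : η = δ ∨ η = -δ)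
    (ε : ℕ → ℝ) (hε : ∀ j, ε j = ((j : ℝ) - ((L : ℝ) + 1) / 2) * δ)
    (P : ℝ → ℝ) (hP : ∀ u, P u = ∏ j ∈ Finset.Icc 1 L, (u - ε j - η / 2))
    (M : ℕ) (hM : 1 ≤ M) (v : Fin M → ℝ) (hinj : Function.Injective v)
    (hvS : ∀ k, ∃ i ∈ Finset.Icc 1 (L - 1), v k = δ * ((i : ℝ) - (L : ℝ) / 2)) :
    ∀ k : Fin M,
      Real.exp (2 * α) * P (v k + η) * ∏ j ∈ Finset.univ.erase k, (v k - v j - η)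
        = P (v k) * ∏ j ∈ Finset.univ.erase k, (v k - v j + η)
      ∧ P (v k) * ∏ j ∈ Finset.univ.erase k, (v k - v j + η) = 0 :=
  stmt_3_general δ L α η hη ε hε P hP M v hvS
end

section
/- Fix integers L ≥ 2 and 1 ≤ M ≤ L/2, a real δ > 0, and reals G_+ > 0, G_- > 0 with G_+ - G_- = 2δ or G_+ - G_- = -2δ. Let H be the pair-sector Hamiltonian matrix defined in the context. Then for every M-element subset T of S = {δ(k - L/2) : k = 1, ..., L-1} such that |v - w| > δ for all distinct v, w ∈ T, the number E = 2∑_{v ∈ T} v is an eigenvalue of H. -/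
/-!
Each `v ∈ T` lies midway between two neighbouring levels `k - 1, k`, and the gap condition makes
these pairs disjoint. The eigenvector is the product state `⊗ (|k - 1⟩ - |k⟩)` over the pairs.
Evaluate `H x` on a configuration. If it occupies one level of every pair, only hops inside a
pair contribute; each flips one sign, and on the critical line `G₋ - G₊ = 2δ` its amplitude
offsets the level spacing, so both levels of the pair give the energy `2 v`. If it misses a pair,
the two hops into that pair cancel: they start from states of opposite sign, and `G` only depends
on the order of the levels. On the other critical line the argument applies to `Hᵀ`, which has
the same eigenvalues.
-/

open Finset Matrix Function

namespace Finset

variable {α : Type*} [DecidableEq α] {A : Finset α} {j j' k k' : α}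

lemma card_insert_erase_of_mem (hk : k ∈ A) (hj : j ∉ A) :
    (insert j (A.erase k)).card = A.card := by
  rw [card_insert_of_notMem (fun h => hj (mem_of_mem_erase h)), card_erase_add_one hk]

lemma insert_erase_insert_erase (hk : k ∈ A) (hj : j ∉ A) :
    insert k ((insert j (A.erase k)).erase j) = A := by
  rw [erase_insert (fun h => hj (mem_of_mem_erase h)), insert_erase hk]

lemma notMem_insert_erase (hk : k ∈ A) (hj : j ∉ A) : k ∉ insert j (A.erase k) := by
  simp [ne_of_mem_of_not_mem hk hj]

lemma eq_of_insert_erase_eq (hk : k ∈ A) (hj : j ∉ A) (hj' : j' ∉ A)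
    (h : insert j (A.erase k) = insert j' (A.erase k')) : k = k' ∧ j = j' := by
  have hjj : j = j' := by
    have := h ▸ mem_insert_self j (A.erase k)
    grind
  subst hjj
  refine ⟨by_contra fun hne => notMem_insert_erase hk hj ?_, rfl⟩
  rw [h]
  exact mem_insert_of_mem (mem_erase.2 ⟨hne, hk⟩)

end Finset

section Hopping

variable {α R : Type*} [DecidableEq α] {M : ℕ}
  {H : Matrix {A : Finset α // A.card = M} {A : Finset α // A.card = M} R}

theorem transpose_apply_eq_of_hop {g : α → α → R}
    (hoff : ∀ A A' (j k : α), j ∈ A.1 → k ∉ A.1 → A'.1 = insert k (A.1.erase j) →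
      H A' A = g j k) (A A') (j k : α) (hj : j ∈ A.1) (hk : k ∉ A.1)
    (hA' : A'.1 = insert k (A.1.erase j)) : Hᵀ A' A = g k j :=
  hoff A' A k j (by simp [hA']) (hA' ▸ notMem_insert_erase hj hk)
    (by rw [hA', insert_erase_insert_erase hj hk])

theorem transpose_apply_eq_zero_of_not_hop [Zero R]
    (hzero : ∀ A A', A' ≠ A →
      (¬ ∃ j k, j ∈ A.1 ∧ k ∉ A.1 ∧ A'.1 = insert k (A.1.erase j)) → H A' A = 0)
    (A A') (hne : A' ≠ A) (hnot : ¬ ∃ j k, j ∈ A.1 ∧ k ∉ A.1 ∧ A'.1 = insert k (A.1.erase j)) :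
    Hᵀ A' A = 0 :=
  hzero A' A hne.symm fun ⟨j, k, hj, hk, hA⟩ => hnot ⟨k, j, by simp [hA],
    hA ▸ notMem_insert_erase hj hk, by rw [hA, insert_erase_insert_erase hj hk]⟩

theorem mulVec_apply_of_hop [Fintype α] [CommRing R] {G : α → α → R}
    (hoff : ∀ A A' (j k : α), j ∈ A.1 → k ∉ A.1 → A'.1 = insert k (A.1.erase j) →
      H A' A = -G j k)
    (hzero : ∀ A A', A' ≠ A →
      (¬ ∃ j k, j ∈ A.1 ∧ k ∉ A.1 ∧ A'.1 = insert k (A.1.erase j)) → H A' A = 0)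
    (f : Finset α → R) (A' : {A : Finset α // A.card = M}) :
    (H *ᵥ fun A => f A.1) A' =
      H A' A' * f A'.1 + ∑ k ∈ A'.1, ∑ j ∈ A'.1ᶜ, -G j k * f (insert j (A'.1.erase k)) := by
  rw [mulVec, dotProduct, ← add_sum_erase _ _ (mem_univ A'), ← sum_product']
  congr 1
  symm
  refine sum_bij_ne_zero (fun p hp _ => ⟨insert p.2 (A'.1.erase p.1),
      (card_insert_erase_of_mem (mem_product.1 hp).1 (mem_compl.1 (mem_product.1 hp).2)).trans
        A'.2⟩)
    ?_ ?_ ?_ ?_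
  · intro p hp _
    simp only [mem_product, mem_compl] at hp
    refine mem_erase.2 ⟨fun h => hp.2 ?_, mem_univ _⟩
    rw [← h]
    exact mem_insert_self _ _
  · intro p hp _ q hq _ h
    simp only [mem_product, mem_compl] at hp hq
    obtain ⟨h1, h2⟩ := eq_of_insert_erase_eq hp.1 hp.2 hq.2 (congrArg Subtype.val h)
    exact Prod.ext h1 h2
  · intro A hA hHA
    have hmove : ∃ j k, j ∈ A.1 ∧ k ∉ A.1 ∧ A'.1 = insert k (A.1.erase j) := by
      by_contra hnot
      exact hHA (by rw [hzero A A' (ne_of_mem_erase hA).symm hnot, zero_mul])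
    obtain ⟨j, k, hj, hk, hA'⟩ := hmove
    refine ⟨(k, j), ?_, ?_, Subtype.ext ?_⟩
    · exact mem_product.2 ⟨hA' ▸ mem_insert_self _ _,
        mem_compl.2 (hA' ▸ notMem_insert_erase hj hk)⟩
    · rwa [hA', insert_erase_insert_erase hj hk, ← hoff A A' j k hj hk hA']
    · dsimp only
      rw [hA', insert_erase_insert_erase hj hk]
  · intro p hp _
    simp only [mem_product, mem_compl] at hp
    rw [hoff _ A' p.2 p.1 (mem_insert_self _ _) (notMem_insert_erase hp.1 hp.2)
      (insert_erase_insert_erase hp.1 hp.2).symm]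

end Hopping

theorem Matrix.exists_mulVec_eq_smul_of_transpose {n K : Type*} [Fintype n] [DecidableEq n]
    [CommRing K] [IsDomain K] {A : Matrix n n K} {e : K}
    (h : ∃ x, x ≠ 0 ∧ Aᵀ *ᵥ x = e • x) : ∃ x, x ≠ 0 ∧ A *ᵥ x = e • x := by
  have key : ∀ B : Matrix n n K, (∃ x, x ≠ 0 ∧ B *ᵥ x = e • x) ↔ (B - e • 1).det = 0 := by
    intro B
    simp [← exists_mulVec_eq_zero_iff, sub_mulVec, sub_eq_zero, smul_mulVec]
  rw [key] at h ⊢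
  rwa [← det_transpose, transpose_sub, transpose_smul, transpose_one]

structure DisjointPairs (ι α : Type*) where
  lo : ι → α
  hi : ι → α
  lo_injective : Injective lo
  hi_injective : Injective hi
  lo_ne_hi : ∀ i i', lo i ≠ hi i'

namespace DisjointPairs

variable {α ι R : Type*} [DecidableEq α] [CommRing R]
  {D : DisjointPairs ι α} {S : Finset α} {i i' : ι} {s t : α}

variable (D) in
def sign (S : Finset α) (i : ι) : R :=
  (if D.lo i ∈ S then 1 else 0) - (if D.hi i ∈ S then 1 else 0)

variable (D) in
def occupied (S : Finset α) (i : ι) : α :=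
  if D.lo i ∈ S then D.lo i else D.hi i

lemma sign_insert_erase_self (hst : s = D.lo i ∧ t = D.hi i ∨ s = D.hi i ∧ t = D.lo i)
    (hs : s ∈ S) (ht : t ∉ S) : D.sign (insert t (S.erase s)) i = -(D.sign S i : R) := by
  have hne := D.lo_ne_hi i i
  rcases hst with ⟨rfl, rfl⟩ | ⟨rfl, rfl⟩ <;> simp [sign, hs, ht, hne, hne.symm]

lemma sign_insert_erase_of_ne (hst : s = D.lo i ∧ t = D.hi i ∨ s = D.hi i ∧ t = D.lo i)
    (h : i' ≠ i) : D.sign (insert t (S.erase s)) i' = (D.sign S i' : R) := by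
  have hlo := D.lo_injective.ne h
  have hhi := D.hi_injective.ne h
  have hne := D.lo_ne_hi
  rcases hst with ⟨rfl, rfl⟩ | ⟨rfl, rfl⟩ <;> simp [sign, hlo, hhi, hne, (hne _ _).symm]

lemma occupied_injective : Injective (D.occupied S) := by
  intro i i' h
  simp only [occupied] at h
  split_ifs at h
  · exact D.lo_injective h
  · exact absurd h (D.lo_ne_hi _ _)
  · exact absurd h.symm (D.lo_ne_hi _ _)
  · exact D.hi_injective h

variable [Fintype ι]

variable (D) in
/-- The coefficient of the configuration `S` in the product state `⊗ᵢ (|lo i⟩ - |hi i⟩)`. -/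
def amplitude (S : Finset α) : R :=
  ∏ i, D.sign S i

lemma amplitude_eq_zero (hlo : D.lo i ∉ S) (hhi : D.hi i ∉ S) : D.amplitude S = (0 : R) :=
  prod_eq_zero (mem_univ i) (by simp [sign, hlo, hhi])

lemma amplitude_insert_erase (hst : s = D.lo i ∧ t = D.hi i ∨ s = D.hi i ∧ t = D.lo i)
    (hs : s ∈ S) (ht : t ∉ S) :
    D.amplitude (insert t (S.erase s)) = -(D.amplitude S : R) := by
  classical
  rw [amplitude, amplitude, ← mul_prod_erase _ _ (mem_univ i), ← mul_prod_erase _ _ (mem_univ i),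
    sign_insert_erase_self hst hs ht,
    prod_congr rfl fun i' hi' => sign_insert_erase_of_ne hst (ne_of_mem_erase hi'), neg_mul]

lemma image_occupied (hmeet : ∀ i, D.lo i ∈ S ∨ D.hi i ∈ S) (hcard : S.card ≤ Fintype.card ι) :
    univ.image (D.occupied S) = S := by
  refine eq_of_subset_of_card_le (fun a ha => ?_) ?_
  · obtain ⟨i, -, rfl⟩ := mem_image.1 ha
    unfold occupied
    split_ifs with h
    · exact h
    · exact (hmeet i).resolve_left h
  · rwa [card_image_of_injective _ occupied_injective, card_univ]

lemma hi_notMem_of_lo_mem (hmeet : ∀ i, D.lo i ∈ S ∨ D.hi i ∈ S)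
    (hcard : S.card ≤ Fintype.card ι) (h : D.lo i ∈ S) : D.hi i ∉ S := by
  rw [← image_occupied hmeet hcard]
  rintro hmem
  obtain ⟨i', -, hi'⟩ := mem_image.1 hmem
  unfold occupied at hi'
  split_ifs at hi' with h'
  · exact D.lo_ne_hi _ _ hi'
  · exact h' (D.hi_injective hi' ▸ h)

lemma amplitude_ne_zero [Nontrivial R] {M : ℕ} (hcard : Fintype.card ι = M) :
    (fun A : {A : Finset α // A.card = M} => (D.amplitude A.1 : R)) ≠ 0 := by
  intro h
  have := congrFun h
    ⟨univ.image D.lo, by rw [card_image_of_injective _ D.lo_injective, card_univ, hcard]⟩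
  simp [amplitude, sign, D.lo_ne_hi] at this

variable [Fintype α] {G : α → α → R}

lemma sum_hop_amplitude_of_mem (hst : s = D.lo i ∧ t = D.hi i ∨ s = D.hi i ∧ t = D.lo i)
    (hs : s ∈ S) (ht : t ∉ S) :
    ∑ j ∈ Sᶜ, -G j s * D.amplitude (insert j (S.erase s)) = G t s * D.amplitude S := by
  rw [sum_eq_single_of_mem t (mem_compl.2 ht), amplitude_insert_erase hst hs ht, neg_mul_neg]
  intro j hj hjt
  have hjs : j ≠ s := (ne_of_mem_of_not_mem hs (mem_compl.1 hj)).symm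
  rw [amplitude_eq_zero (i := i), mul_zero] <;>
    rcases hst with ⟨rfl, rfl⟩ | ⟨rfl, rfl⟩ <;> simp [hjs.symm, hjt.symm, ht]

lemma sum_hop_amplitude_eq_zero {k : α} (hlo : D.lo i ∉ S) (hhi : D.hi i ∉ S)
    (hG : G (D.lo i) k = G (D.hi i) k) :
    ∑ j ∈ Sᶜ, -G j k * D.amplitude (insert j (S.erase k)) = 0 := by
  have hne : D.lo i ≠ D.hi i := D.lo_ne_hi i i
  have hflip : D.amplitude (insert (D.hi i) (S.erase k)) =
      -(D.amplitude (insert (D.lo i) (S.erase k)) : R) := by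
    have := amplitude_insert_erase (D := D) (R := R) (S := insert (D.lo i) (S.erase k))
      (Or.inl ⟨rfl, rfl⟩) (mem_insert_self _ _) (by simp [hne.symm, hhi])
    rwa [erase_insert (by simp [hlo])] at this
  rw [← sum_subset (s₁ := {D.lo i, D.hi i}) (by simp [insert_subset_iff, hlo, hhi]),
    sum_pair hne, hG, hflip]
  · ring
  · intro j _ hj
    rw [amplitude_eq_zero (i := i), mul_zero] <;> grind

theorem mulVec_amplitude {M : ℕ}
    {H : Matrix {A : Finset α // A.card = M} {A : Finset α // A.card = M} R} {d : α → R} {c : R}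
    (hdiag : ∀ A, H A A = ∑ j ∈ A.1, d j + c)
    (hoff : ∀ A A' (j k : α), j ∈ A.1 → k ∉ A.1 → A'.1 = insert k (A.1.erase j) →
      H A' A = -G j k)
    (hzero : ∀ A A', A' ≠ A →
      (¬ ∃ j k, j ∈ A.1 ∧ k ∉ A.1 ∧ A'.1 = insert k (A.1.erase j)) → H A' A = 0)
    (hcard : Fintype.card ι = M)
    (hbal : ∀ i, d (D.lo i) + G (D.hi i) (D.lo i) = d (D.hi i) + G (D.lo i) (D.hi i))
    (hG : ∀ i k, k ≠ D.lo i → k ≠ D.hi i → G (D.lo i) k = G (D.hi i) k) :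
    H *ᵥ (fun A => D.amplitude A.1) =
      (∑ i, (d (D.lo i) + G (D.hi i) (D.lo i)) + c) • fun A => D.amplitude A.1 := by
  funext A'
  rw [mulVec_apply_of_hop hoff hzero, hdiag, Pi.smul_apply, smul_eq_mul]
  have hcard' : A'.1.card ≤ Fintype.card ι := (A'.2.trans hcard.symm).le
  set S := A'.1
  by_cases hmeet : ∀ i, D.lo i ∈ S ∨ D.hi i ∈ S
  · have reindex : ∀ F : α → R, ∑ k ∈ S, F k = ∑ i, F (D.occupied S i) := fun F => by
      conv_lhs => rw [← image_occupied hmeet hcard']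
      exact sum_image fun _ _ _ _ h => occupied_injective h
    have hblock : ∀ i, d (D.occupied S i) * D.amplitude S +
        ∑ j ∈ Sᶜ, -G j (D.occupied S i) * D.amplitude (insert j (S.erase (D.occupied S i)))
        = (d (D.lo i) + G (D.hi i) (D.lo i)) * D.amplitude S := by
      intro i
      by_cases h : D.lo i ∈ S
      · rw [occupied, if_pos h, sum_hop_amplitude_of_mem (Or.inl ⟨rfl, rfl⟩) h
          (hi_notMem_of_lo_mem hmeet hcard' h)]
        ring
      · rw [occupied, if_neg h, sum_hop_amplitude_of_mem (Or.inr ⟨rfl, rfl⟩)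
          ((hmeet i).resolve_left h) h, hbal]
        ring
    rw [reindex, reindex, add_mul, sum_mul, add_right_comm, ← sum_add_distrib,
      sum_congr rfl fun i _ => hblock i, add_mul, sum_mul]
  · push Not at hmeet
    obtain ⟨i, hlo, hhi⟩ := hmeet
    rw [amplitude_eq_zero hlo hhi, sum_eq_zero fun k hk => sum_hop_amplitude_eq_zero hlo hhi
      (hG i k (ne_of_mem_of_not_mem hk hlo) (ne_of_mem_of_not_mem hk hhi))]
    ring

end DisjointPairs

lemma Nat.add_two_le_or_of_lt_abs {δ x : ℝ} (hδ : 0 < δ) {a b : ℕ}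
    (h : δ < |δ * ((a : ℝ) - x) - δ * ((b : ℝ) - x)|) : a + 2 ≤ b ∨ b + 2 ≤ a := by
  rw [← mul_sub, sub_sub_sub_cancel_right, abs_mul, abs_of_pos hδ, lt_mul_iff_one_lt_right hδ,
    lt_abs] at h
  rcases h with h | h
  · have : ((b + 1 : ℕ) : ℝ) < a := by push_cast; linarith
    have := Nat.cast_lt.1 this
    omega
  · have : ((a + 1 : ℕ) : ℝ) < b := by push_cast; linarith
    have := Nat.cast_lt.1 this
    omega

lemma eq_of_covBy_of_ne {α β : Type*} [LinearOrder α] {G : α → α → β} {p q : β}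
    (hlt : ∀ j k, j < k → G j k = p) (hgt : ∀ j k, k < j → G j k = q) {a b j : α}
    (hab : a ⋖ b) (ha : j ≠ a) (hb : j ≠ b) : G a j = G b j := by
  rcases lt_or_gt_of_ne ha with h | h
  · rw [hgt _ _ h, hgt _ _ (h.trans hab.lt)]
  · rw [hlt _ _ h, hlt _ _ ((hab.ge_of_gt h).lt_of_ne hb.symm)]

namespace DisjointPairs

def adjacent {ι : Type*} {L : ℕ} (k : ι → ℕ) (hk : ∀ i, 1 ≤ k i ∧ k i < L)
    (hsep : ∀ i i', i ≠ i' → k i + 2 ≤ k i' ∨ k i' + 2 ≤ k i) : DisjointPairs ι (Fin L) where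
  lo i := ⟨k i - 1, by have := hk i; omega⟩
  hi i := ⟨k i, (hk i).2⟩
  lo_injective i i' h := by
    by_contra hne
    have := hsep i i' hne
    have := hk i
    have := hk i'
    simp only [Fin.mk.injEq] at h
    omega
  hi_injective i i' h := by
    by_contra hne
    have := hsep i i' hne
    simp only [Fin.mk.injEq] at h
    omega
  lo_ne_hi i i' h := by
    have := hk i
    simp only [Fin.mk.injEq] at h
    by_cases hne : i = i'
    · subst hne; omega
    · have := hsep i i' hne; omega

end DisjointPairs

/-- Each `v = δ (k - L/2) ∈ T` is the midpoint of the (0-indexed) levels `ε (k - 1)` and `ε k`,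
which form the pair carrying `v`. -/
theorem picketFence_exists_mulVec_eq_smul (L M : ℕ) (δ : ℝ) (hδ : 0 < δ) (Gp Gm : ℝ)
    (hcrit : Gm - Gp = 2 * δ)
    (ε : Fin L → ℝ) (hε : ∀ j, ε j = (((j : ℕ) : ℝ) + 1 - ((L : ℝ) + 1) / 2) * δ)
    (G : Fin L → Fin L → ℝ) (hlt : ∀ j k, j < k → G j k = Gp) (hgt : ∀ j k, k < j → G j k = Gm)
    (H : Matrix {A : Finset (Fin L) // A.card = M} {A : Finset (Fin L) // A.card = M} ℂ)
    (hdiag : ∀ A, H A A = ((2 * ∑ j ∈ A.1, ε j - M * (Gp + Gm) / 2 : ℝ) : ℂ))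
    (hoff : ∀ A A' (j k : Fin L), j ∈ A.1 → k ∉ A.1 → A'.1 = insert k (A.1.erase j) →
      H A' A = ((-(G j k) : ℝ) : ℂ))
    (hzero : ∀ A A', A' ≠ A →
      (¬ ∃ j k, j ∈ A.1 ∧ k ∉ A.1 ∧ A'.1 = insert k (A.1.erase j)) → H A' A = 0)
    (T : Finset ℝ) (hTcard : T.card = M)
    (hTS : ∀ v ∈ T, ∃ k ∈ Finset.Icc 1 (L - 1), v = δ * ((k : ℝ) - (L : ℝ) / 2))
    (hTgap : ∀ v ∈ T, ∀ w ∈ T, v ≠ w → δ < |v - w|) :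
    ∃ x : {A : Finset (Fin L) // A.card = M} → ℂ, x ≠ 0 ∧
      H.mulVec x = ((2 * ∑ v ∈ T, v : ℝ) : ℂ) • x := by
  choose! k hkIcc hkv using hTS
  have hk (v : T) : 1 ≤ k v ∧ k v < L := by have := mem_Icc.1 (hkIcc v v.2); omega
  let D := DisjointPairs.adjacent (fun v : T => k v) hk fun v w hvw =>
    Nat.add_two_le_or_of_lt_abs hδ (hkv v v.2 ▸ hkv w w.2 ▸
      hTgap v v.2 w w.2 fun h => hvw (Subtype.ext h))
  have hcov (v : T) : D.lo v ⋖ D.hi v := by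
    have := hk v
    refine ⟨?_, fun c h₁ h₂ => ?_⟩ <;>
      simp only [D, DisjointPairs.adjacent, Fin.lt_def] at * <;> omega
  have hε_lo (v : T) : 2 * ε (D.lo v) = 2 * v - δ := by
    rw [hε, hkv v v.2]
    simp only [D, DisjointPairs.adjacent, Nat.cast_sub (hk v).1]
    push_cast
    ring
  have hε_hi (v : T) : 2 * ε (D.hi v) = 2 * v + δ := by
    rw [hε, hkv v v.2]
    simp only [D, DisjointPairs.adjacent]
    ring
  refine ⟨_, D.amplitude_ne_zero (by simp [hTcard]), ?_⟩
  rw [D.mulVec_amplitude (d := fun j => 2 * (ε j : ℂ)) (c := -(M * ((Gp : ℂ) + Gm) / 2))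
    (G := fun j k => (G j k : ℂ))]
  · congr 1
    have hterm (v : T) : 2 * (ε (D.lo v) : ℂ) + G (D.hi v) (D.lo v) = 2 * v + (Gp + Gm) / 2 := by
      rw [hgt _ _ (hcov v).lt]
      exact_mod_cast (by linarith [hε_lo v] : 2 * ε (D.lo v) + Gm = 2 * v + (Gp + Gm) / 2)
    rw [sum_congr rfl fun v _ => hterm v, sum_add_distrib, sum_const, card_univ, Fintype.card_coe,
      hTcard, ← mul_sum, nsmul_eq_mul, sum_coe_sort T (fun v : ℝ => (v : ℂ))]
    push_cast
    ring
  · intro A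
    rw [hdiag]
    push_cast
    rw [mul_sum]
    ring
  · intro A A' j k hj hk hA'
    rw [hoff A A' j k hj hk hA', Complex.ofReal_neg]
  · exact hzero
  · simp [hTcard]
  · intro v
    rw [hgt _ _ (hcov v).lt, hlt _ _ (hcov v).lt]
    exact_mod_cast (by linarith [hε_lo v, hε_hi v] :
      2 * ε (D.lo v) + Gm = 2 * ε (D.hi v) + Gp)
  · intro v j hlo hhi
    exact congrArg _ (eq_of_covBy_of_ne hlt hgt (hcov v) hlo hhi)

theorem stmt_4_general (L M : ℕ)
    (δ : ℝ) (hδ : 0 < δ) (Gp Gm : ℝ)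
    (hcrit : Gp - Gm = 2 * δ ∨ Gp - Gm = -(2 * δ))
    (ε : Fin L → ℝ) (hε : ∀ j, ε j = (((j : ℕ) : ℝ) + 1 - ((L : ℝ) + 1) / 2) * δ)
    (G : Fin L → Fin L → ℝ)
    (hG : ∀ j k, G j k = if j < k then Gp else if k < j then Gm else (Gp + Gm) / 2)
    (H : Matrix {A : Finset (Fin L) // A.card = M} {A : Finset (Fin L) // A.card = M} ℂ)
    (hdiag : ∀ A, H A A = ((2 * ∑ j ∈ A.1, ε j - M * (Gp + Gm) / 2 : ℝ) : ℂ))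
    (hoff : ∀ A A' (j k : Fin L), j ∈ A.1 → k ∉ A.1 → A'.1 = insert k (A.1.erase j) →
      H A' A = ((-(G j k) : ℝ) : ℂ))
    (hzero : ∀ A A', A' ≠ A →
      (¬ ∃ j k, j ∈ A.1 ∧ k ∉ A.1 ∧ A'.1 = insert k (A.1.erase j)) → H A' A = 0)
    (T : Finset ℝ) (hTcard : T.card = M)
    (hTS : ∀ v ∈ T, ∃ k ∈ Finset.Icc 1 (L - 1), v = δ * ((k : ℝ) - (L : ℝ) / 2))
    (hTgap : ∀ v ∈ T, ∀ w ∈ T, v ≠ w → δ < |v - w|) :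
    ∃ x : {A : Finset (Fin L) // A.card = M} → ℂ, x ≠ 0 ∧
      H.mulVec x = ((2 * ∑ v ∈ T, v : ℝ) : ℂ) • x := by
  have hlt : ∀ j k, j < k → G j k = Gp := fun j k h => by rw [hG, if_pos h]
  have hgt : ∀ j k, k < j → G j k = Gm := fun j k h => by rw [hG, if_neg (asymm h), if_pos h]
  rcases hcrit with hc | hc
  · exact exists_mulVec_eq_smul_of_transpose <|
      picketFence_exists_mulVec_eq_smul L M δ hδ Gm Gp (by linarith) ε hε (fun j k => G k j)
        (fun j k h => hgt k j h) (fun j k h => hlt k j h) Hᵀ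
        (fun A => by rw [transpose_apply, hdiag, add_comm Gm])
        (transpose_apply_eq_of_hop hoff) (transpose_apply_eq_zero_of_not_hop hzero)
        T hTcard hTS hTgap
  · exact picketFence_exists_mulVec_eq_smul L M δ hδ Gp Gm (by linarith) ε hε G hlt hgt H hdiag
      hoff hzero T hTcard hTS hTgap

/-- On the critical lines `G₊ - G₋ = ±2δ`, for every `M`-element subset `T` of
`S = {δ(k - L/2) : k = 1, ..., L-1}` whose distinct elements satisfy `|v - w| > δ`,
the number `E = 2∑_{v∈T} v` is an eigenvalue of the pair-sector BCS Hamiltonian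
matrix `H` (indexed by `M`-element subsets of the `L` levels). -/
theorem stmt_4 (L M : ℕ) (hL : 2 ≤ L) (hM1 : 1 ≤ M) (hM2 : 2 * M ≤ L)
    (δ : ℝ) (hδ : 0 < δ) (Gp Gm : ℝ) (hGp : 0 < Gp) (hGm : 0 < Gm)
    (hcrit : Gp - Gm = 2 * δ ∨ Gp - Gm = -(2 * δ))
    (ε : Fin L → ℝ) (hε : ∀ j, ε j = (((j : ℕ) : ℝ) + 1 - ((L : ℝ) + 1) / 2) * δ)
    (G : Fin L → Fin L → ℝ)
    (hG : ∀ j k, G j k = if j < k then Gp else if k < j then Gm else (Gp + Gm) / 2)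
    (H : Matrix {A : Finset (Fin L) // A.card = M} {A : Finset (Fin L) // A.card = M} ℂ)
    (hdiag : ∀ A, H A A = ((2 * ∑ j ∈ A.1, ε j - M * (Gp + Gm) / 2 : ℝ) : ℂ))
    (hoff : ∀ A A' (j k : Fin L), j ∈ A.1 → k ∉ A.1 → A'.1 = insert k (A.1.erase j) →
      H A' A = ((-(G j k) : ℝ) : ℂ))
    (hzero : ∀ A A', A' ≠ A →
      (¬ ∃ j k, j ∈ A.1 ∧ k ∉ A.1 ∧ A'.1 = insert k (A.1.erase j)) → H A' A = 0)
    (T : Finset ℝ) (hTcard : T.card = M)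
    (hTS : ∀ v ∈ T, ∃ k ∈ Finset.Icc 1 (L - 1), v = δ * ((k : ℝ) - (L : ℝ) / 2))
    (hTgap : ∀ v ∈ T, ∀ w ∈ T, v ≠ w → δ < |v - w|) :
    ∃ x : {A : Finset (Fin L) // A.card = M} → ℂ, x ≠ 0 ∧
      H.mulVec x = ((2 * ∑ v ∈ T, v : ℝ) : ℂ) • x :=
  stmt_4_general L M δ hδ Gp Gm hcrit ε hε G hG H hdiag hoff hzero T hTcard hTS hTgap
end

section
/- Fix reals ω > 0 and g > 0. For g_+ > g_- > 0 define χ = 1/(g_+ − g_-) and Δ(g_+, g_-) = 4ω (g_+ g_-)^{χ/2} · (1/2) / (g_+^χ − g_-^χ) = 2ω / ((g_+/g_-)^{χ/2} − (g_- /g_+)^{χ/2}) (the positive square root of 16ω² g_+^χ g_-^χ (1/4)/(g_+^χ − g_-^χ)², i.e. the half-filling gap x = 1/2). Then Δ(g_+, g_-) tends to ω / sinh(1/(2g)) as (g_+, g_-) tends to (g, g) within the region g_+ > g_- > 0. -/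
open Filter Real

/-- Algebraic identity: the gap formula equals `ω / sinh` of a slope expression. -/
lemma gap_eq_sinh (ω x y : ℝ) (hy : 0 < y) (hxy : y < x) :
    4 * ω * (x * y) ^ ((1 / (x - y)) / 2) * (1 / 2) /
        (x ^ (1 / (x - y)) - y ^ (1 / (x - y)))
      = ω / Real.sinh (slope Real.log 1 (x / y) * (1 / (2 * y))) := by
  have hx : 0 < x := hy.trans hxy
  set χ : ℝ := 1 / (x - y) with hχdef
  have hxy' : 0 < x - y := sub_pos.mpr hxy
  have hχ : 0 < χ := by positivity
  -- simplify the slope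
  have hslope : slope Real.log 1 (x / y) * (1 / (2 * y))
      = (χ / 2) * (Real.log x - Real.log y) := by
    rw [slope_def_field, Real.log_one, Real.log_div hx.ne' hy.ne']
    have h1 : x / y - 1 = (x - y) / y := by field_simp
    rw [h1, hχdef]
    field_simp
    ring
  rw [hslope]
  set a : ℝ := x ^ (χ / 2) with hadef
  set b : ℝ := y ^ (χ / 2) with hbdef
  have ha : 0 < a := Real.rpow_pos_of_pos hx _
  have hb : 0 < b := Real.rpow_pos_of_pos hy _
  have hba : b < a := Real.rpow_lt_rpow hy.le hxy (by positivity)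
  have hxχ : x ^ χ = a * a := by
    rw [hadef, ← Real.rpow_add hx]; norm_num
  have hyχ : y ^ χ = b * b := by
    rw [hbdef, ← Real.rpow_add hy]; norm_num
  have hxyχ : (x * y) ^ (χ / 2) = a * b := Real.mul_rpow hx.le hy.le
  have hea : Real.exp ((χ / 2) * (Real.log x - Real.log y)) = a / b := by
    rw [mul_sub, Real.exp_sub, hadef, hbdef,
      Real.rpow_def_of_pos hx, Real.rpow_def_of_pos hy, mul_comm (χ/2), mul_comm (χ/2)]
  have heb : Real.exp (-((χ / 2) * (Real.log x - Real.log y))) = b / a := by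
    rw [Real.exp_neg, hea, inv_div]
  rw [Real.sinh_eq, hea, heb, hxχ, hyχ, hxyχ]
  have hne : a * a - b * b ≠ 0 := by nlinarith
  have hne2 : a / b - b / a ≠ 0 := by
    have : b / a < a / b := by
      rw [div_lt_div_iff₀ ha hb]; nlinarith
    linarith
  field_simp
  ring

/-- In the hermitian limit `g± → g` (within `g₊ > g₋ > 0`), the half-filling
mean-field gap `Δ(g₊,g₋) = 4ω (g₊g₋)^{χ/2}·(1/2)/(g₊^χ - g₋^χ)`, with
`χ = 1/(g₊ - g₋)`, tends to the classic s-wave BCS value `ω / sinh(1/(2g))`. -/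
theorem stmt_10 (ω g : ℝ) (hω : 0 < ω) (hg : 0 < g)
    (Δ : ℝ → ℝ → ℝ)
    (hΔ : ∀ gp gm : ℝ, gm < gp → 0 < gm →
      Δ gp gm = 4 * ω * (gp * gm) ^ ((1 / (gp - gm)) / 2) * (1 / 2) /
        (gp ^ (1 / (gp - gm)) - gm ^ (1 / (gp - gm)))) :
    Filter.Tendsto (fun p : ℝ × ℝ => Δ p.1 p.2)
      (nhdsWithin (g, g) {p : ℝ × ℝ | p.2 < p.1 ∧ 0 < p.2})
      (nhds (ω / Real.sinh (1 / (2 * g)))) := by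
  set S : Set (ℝ × ℝ) := {p : ℝ × ℝ | p.2 < p.1 ∧ 0 < p.2} with hS
  set l := nhdsWithin ((g : ℝ), g) S with hl
  -- Step 1: p.1 / p.2 tends to 1 within the punctured nbhd
  have T1 : Tendsto (fun p : ℝ × ℝ => p.1 / p.2) l (nhdsWithin 1 {x | x ≠ 1}) := by
    rw [tendsto_nhdsWithin_iff]
    constructor
    · have : ContinuousAt (fun p : ℝ × ℝ => p.1 / p.2) (g, g) :=
        ContinuousAt.div continuousAt_fst continuousAt_snd hg.ne'
      have := this.continuousWithinAt (s := S)
      simpa [div_self hg.ne'] using this.tendsto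
    · filter_upwards [self_mem_nhdsWithin] with p hp
      obtain ⟨h1, h2⟩ := hp
      have : (1 : ℝ) < p.1 / p.2 := (one_lt_div h2).mpr h1
      exact ne_of_gt this
  -- Step 2: slope of log at 1 tends to 1
  have hder : HasDerivAt Real.log 1 1 := by
    simpa using Real.hasDerivAt_log one_ne_zero
  have T2 : Tendsto (fun p : ℝ × ℝ => slope Real.log 1 (p.1 / p.2)) l (nhds 1) :=
    (hasDerivAt_iff_tendsto_slope.mp hder).comp T1
  -- Step 3: 1/(2 p.2) tends to 1/(2g)
  have T3 : Tendsto (fun p : ℝ × ℝ => 1 / (2 * p.2)) l (nhds (1 / (2 * g))) := by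
    have : ContinuousAt (fun p : ℝ × ℝ => 1 / (2 * p.2)) (g, g) := by
      apply ContinuousAt.div continuousAt_const
      · exact continuousAt_const.mul continuousAt_snd
      · simpa using (mul_pos two_pos hg).ne'
    exact (this.continuousWithinAt (s := S)).tendsto
  -- Step 4: product
  have T4 : Tendsto (fun p : ℝ × ℝ =>
      slope Real.log 1 (p.1 / p.2) * (1 / (2 * p.2))) l (nhds (1 / (2 * g))) := by
    have := T2.mul T3
    simpa using this
  -- Step 5: compose with ω / sinh
  have hsinh : Real.sinh (1 / (2 * g)) ≠ 0 := by
    have : 0 < Real.sinh (1 / (2 * g)) := Real.sinh_pos_iff.mpr (by positivity)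
    exact this.ne'
  have hc : ContinuousAt (fun t : ℝ => ω / Real.sinh t) (1 / (2 * g)) :=
    ContinuousAt.div continuousAt_const Real.continuous_sinh.continuousAt hsinh
  have T5 : Tendsto (fun p : ℝ × ℝ =>
      ω / Real.sinh (slope Real.log 1 (p.1 / p.2) * (1 / (2 * p.2)))) l
      (nhds (ω / Real.sinh (1 / (2 * g)))) := hc.tendsto.comp T4
  -- Step 6: eventual equality
  refine T5.congr' ?_
  filter_upwards [self_mem_nhdsWithin] with p hp
  obtain ⟨h1, h2⟩ := hp
  rw [hΔ p.1 p.2 h1 h2, gap_eq_sinh ω p.1 p.2 h2 h1]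
end
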